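/- Let X_1,…,X_N be Banach spaces of scalar sequences containing the canonical unit vectors e_n, and let Y be a strictly convex Banach space. If a continuous N-linear map Φ : X_1 × ⋯ × X_N → Y attains its norm at (a_1,…,a_N) ∈ B_{X_1} × ⋯ × B_{X_N}, where each a_j has the property that there exist n_j ∈ ℕ and δ_j > 0 with ‖a_j + λ e_n‖ ≤ 1 for all |λ| ≤ δ_j and n ≥ n_j, then there exists n_0 ∈ ℕ such that Φ(e_{n_1},…,e_{n_N}) = 0 for all n_1,…,n_N ≥ n_0. -/

import Mathlib

/-!
Fix `n` beyond all the `n₀`'s and write `e` for the unit vectors `e_{n_j}`. Expanding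
`Φ(a + c·e)` multilinearly, and assuming by strong induction on `S` that `Φ` vanishes at every
point carrying `e` exactly on a nonempty proper subset of `S`, the perturbation supported on `S`
gives `Φ a ± r • Φ(e on S, a off S)` with `r = ∏_{j ∈ S} δ_j`, according to the sign chosen in
one coordinate. Both points lie in the unit ball, so both values have norm at most `‖Φ‖ = ‖Φ a‖`;
in a strictly convex space `‖y + z‖ ≤ ‖y‖` and `‖y - z‖ ≤ ‖y‖` force `z = 0`, since `y` is their
midpoint.
-/
noncomputable section

open NormedSpace Filter Topology Metric

/-- The topological dual of a normed space, `E →L[𝕜] 𝕜` (the older Mathlib's `NormedSpace.Dual`,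
restored here with its old signature). -/
abbrev NormedSpace.Dual (𝕜 : Type*) [NontriviallyNormedField 𝕜] (E : Type*)
    [SeminormedAddCommGroup E] [NormedSpace 𝕜 E] : Type _ :=
  E →L[𝕜] 𝕜

/-- The dual (transpose) of a continuous linear operator between normed spaces. -/
def dualOp (𝕜 : Type*) [RCLike 𝕜] {E F : Type*} [NormedAddCommGroup E] [NormedSpace 𝕜 E]
    [NormedAddCommGroup F] [NormedSpace 𝕜 F] (T : E →L[𝕜] F) :
    NormedSpace.Dual 𝕜 F →L[𝕜] NormedSpace.Dual 𝕜 E :=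
  (ContinuousLinearMap.compL 𝕜 E F 𝕜).flip T

/-- The canonical (Arens) extension of a continuous multilinear map `Φ : X × ⋯ × X → W`
to the bidual, evaluated at a point `xs` of the `N`-fold product of the bidual of `X`,
with values in the bidual of `W`.  It is obtained by extending one variable at a time,
the first variable being extended last (which corresponds to the iterated weak-star
limit `lim_{α₁} … lim_{α_N}`).  It is bundled as a continuous linear map in `Φ`. -/
def arens (𝕜 : Type*) [RCLike 𝕜] (X W : Type*) [NormedAddCommGroup X] [NormedSpace 𝕜 X]
    [NormedAddCommGroup W] [NormedSpace 𝕜 W] :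
    ∀ {N : ℕ}, (Fin N → NormedSpace.Dual 𝕜 (NormedSpace.Dual 𝕜 X)) →
      (ContinuousMultilinearMap 𝕜 (fun _ : Fin N => X) W →L[𝕜]
        NormedSpace.Dual 𝕜 (NormedSpace.Dual 𝕜 W))
  | 0, _ =>
      (NormedSpace.inclusionInDoubleDual 𝕜 W).comp
        ((continuousMultilinearCurryFin0 𝕜 X W).toContinuousLinearEquiv :
          ContinuousMultilinearMap 𝕜 (fun _ : Fin 0 => X) W ≃L[𝕜] W).toContinuousLinearMap
  | (N + 1), xs =>
      ((ContinuousLinearMap.compL 𝕜 (NormedSpace.Dual 𝕜 W) (NormedSpace.Dual 𝕜 X) 𝕜 (xs 0)).comp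
        (((ContinuousLinearMap.flipₗᵢ 𝕜 X (NormedSpace.Dual 𝕜 W) 𝕜).toContinuousLinearEquiv :
            (X →L[𝕜] NormedSpace.Dual 𝕜 (NormedSpace.Dual 𝕜 W)) ≃L[𝕜]
              (NormedSpace.Dual 𝕜 W →L[𝕜] NormedSpace.Dual 𝕜 X)).toContinuousLinearMap.comp
          ((ContinuousLinearMap.compL 𝕜 X
              (ContinuousMultilinearMap 𝕜 (fun _ : Fin N => X) W)
              (NormedSpace.Dual 𝕜 (NormedSpace.Dual 𝕜 W)) (arens 𝕜 X W (Fin.tail xs))).comp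
            ((continuousMultilinearCurryLeftEquiv 𝕜 (fun _ : Fin (N + 1) => X)
                W).toContinuousLinearEquiv :
              ContinuousMultilinearMap 𝕜 (fun _ : Fin (N + 1) => X) W ≃L[𝕜]
                (X →L[𝕜] ContinuousMultilinearMap 𝕜 (fun _ : Fin N => X) W)).toContinuousLinearMap)))

end

section Core2

open NormedSpace Filter Topology Metric

variable (𝕜 : Type*) [RCLike 𝕜] {X W : Type*} [NormedAddCommGroup X] [NormedSpace 𝕜 X]
  [NormedAddCommGroup W] [NormedSpace 𝕜 W] {N : ℕ}

/-- The norm of the `N`-homogeneous polynomial associated to a continuous multilinear map,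
i.e. the supremum of `‖Φ (x, …, x)‖` over the closed unit ball. -/
noncomputable def polyNorm (Φ : ContinuousMultilinearMap 𝕜 (fun _ : Fin N => X) W) : ℝ :=
  ⨆ x : Metric.closedBall (0 : X) 1, ‖Φ (fun _ => (x : X))‖

/-- A multilinear map is symmetric if it is invariant under permutation of its arguments. -/
def IsSymmetricMap (Φ : ContinuousMultilinearMap 𝕜 (fun _ : Fin N => X) W) : Prop :=
  ∀ (σ : Equiv.Perm (Fin N)) (m : Fin N → X), Φ (fun i => m (σ i)) = Φ m

/-- The polynomial associated to `Φ` attains its norm on the closed unit ball. -/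
def PolyNormAttaining (Φ : ContinuousMultilinearMap 𝕜 (fun _ : Fin N => X) W) : Prop :=
  ∃ a : X, ‖a‖ ≤ 1 ∧ ‖Φ (fun _ => a)‖ = polyNorm 𝕜 Φ

/-- The Aron–Berner extension of the polynomial associated to `Φ` attains its norm on the
closed unit ball of the bidual.  (Recall that the Aron–Berner extension has the same norm
as the polynomial itself.) -/
def ABNormAttaining (Φ : ContinuousMultilinearMap 𝕜 (fun _ : Fin N => X) W) : Prop :=
  ∃ a'' : NormedSpace.Dual 𝕜 (NormedSpace.Dual 𝕜 X), ‖a''‖ ≤ 1 ∧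
    ‖arens 𝕜 X W (fun _ => a'') Φ‖ = polyNorm 𝕜 Φ

/-- A normed space `E` has the approximation property if the identity map can be approximated,
uniformly on compact sets, by continuous finite-rank operators. -/
def HasApproximationProperty (E : Type*) [NormedAddCommGroup E] [NormedSpace 𝕜 E] : Prop :=
  ∀ K : Set E, IsCompact K → ∀ ε : ℝ, 0 < ε →
    ∃ T : E →L[𝕜] E, FiniteDimensional 𝕜 (LinearMap.range (T : E →ₗ[𝕜] E)) ∧
      ∀ x ∈ K, ‖T x - x‖ ≤ ε

end Core2

open Finset

theorem eq_zero_of_norm_add_le_of_norm_sub_le {E : Type*} [NormedAddCommGroup E]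
    [NormedSpace ℝ E] [StrictConvexSpace ℝ E] {y z : E} (h₁ : ‖y + z‖ ≤ ‖y‖)
    (h₂ : ‖y - z‖ ≤ ‖y‖) : z = 0 := by
  by_contra hz
  have hne : y + z ≠ y - z := by
    rw [Ne, sub_eq_add_neg, add_right_inj, eq_neg_iff_add_eq_zero, ← two_smul ℝ, smul_eq_zero]
    simpa using hz
  have := norm_combo_lt_of_ne h₁ h₂ hne (a := 1 / 2) (b := 1 / 2) (by norm_num) (by norm_num)
    (by norm_num)
  rw [show (1 / 2 : ℝ) • (y + z) + (1 / 2 : ℝ) • (y - z) = y by module] at this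
  exact this.false

namespace MultilinearMap

variable {R ι : Type*} [CommSemiring R] {M : ι → Type*} [∀ i, AddCommMonoid (M i)]
  [∀ i, Module R (M i)] {M' : Type*} [AddCommMonoid M'] [Module R M'] [DecidableEq ι]

theorem map_piecewise_smul_add (f : MultilinearMap R M M') (c : ι → R) (e a : ∀ i, M i)
    (S : Finset ι) :
    f (S.piecewise (fun i => c i • e i + a i) a) =
      ∑ T ∈ S.powerset, (∏ i ∈ T, c i) • f (T.piecewise e a) := by
  rw [← Pi.add_def, f.map_piecewise_add]
  refine sum_congr rfl fun T _ => ?_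
  rw [← f.map_piecewise_smul]
  congr 1
  ext i
  by_cases hi : i ∈ T <;> simp [hi]

theorem map_piecewise_smul_add_of_forall_ssubset (f : MultilinearMap R M M') (c : ι → R)
    (e a : ∀ i, M i) {S : Finset ι} (hS : S.Nonempty)
    (hvanish : ∀ T ⊂ S, T.Nonempty → f (T.piecewise e a) = 0) :
    f (S.piecewise (fun i => c i • e i + a i) a) = f a + (∏ i ∈ S, c i) • f (S.piecewise e a) := by
  rw [f.map_piecewise_smul_add, sum_eq_add ∅ S hS.ne_empty.symm]
  · simp
  · intro T hT hne
    rw [hvanish T (ssubset_of_subset_of_ne (mem_powerset.1 hT) hne.2)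
      (nonempty_iff_ne_empty.2 hne.1), smul_zero]
  · simp
  · simp

end MultilinearMap

namespace ContinuousMultilinearMap

variable {𝕜 ι : Type*} [RCLike 𝕜] [Fintype ι] {X : ι → Type*}
  [∀ i, NormedAddCommGroup (X i)] [∀ i, NormedSpace 𝕜 (X i)] {Y : Type*} [NormedAddCommGroup Y]
  [NormedSpace 𝕜 Y] (Φ : ContinuousMultilinearMap 𝕜 X Y) {a e : ∀ i, X i} {δ : ι → ℝ}

theorem norm_map_piecewise_smul_add_le [DecidableEq ι]
    (hball : ∀ i (t : 𝕜), ‖t‖ ≤ δ i → ‖a i + t • e i‖ ≤ 1) {c : ι → 𝕜} (hc : ∀ i, ‖c i‖ ≤ δ i)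
    (S : Finset ι) : ‖Φ (S.piecewise (fun i => c i • e i + a i) a)‖ ≤ ‖Φ‖ := by
  refine Φ.unit_le_opNorm ((pi_norm_le_iff_of_nonneg zero_le_one).2 fun i => ?_)
  by_cases hi : i ∈ S
  · simpa [hi, add_comm] using hball i (c i) (hc i)
  · simpa [hi] using hball i 0 ((norm_zero (E := 𝕜)).trans_le ((norm_nonneg _).trans (hc i)))

theorem map_piecewise_eq_zero_of_norm_attained [DecidableEq ι] [NormedSpace ℝ Y]
    [StrictConvexSpace ℝ Y] (hδ : ∀ i, 0 < δ i) (hattain : ‖Φ a‖ = ‖Φ‖)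
    (hball : ∀ i (t : 𝕜), ‖t‖ ≤ δ i → ‖a i + t • e i‖ ≤ 1) {S : Finset ι} (hS : S.Nonempty) :
    Φ (S.piecewise e a) = 0 := by
  induction S using Finset.strongInduction with
  | H S ih =>
    obtain ⟨j, hj⟩ := hS
    set c : ι → 𝕜 := fun i => (δ i : 𝕜)
    have hc : ∀ i, ‖c i‖ ≤ δ i := fun i => by simp [c, abs_of_pos (hδ i)]
    have hc' : ∀ i, ‖Function.update c j (-c j) i‖ ≤ δ i := fun i => by
      rcases eq_or_ne i j with rfl | hij <;> simp_all
    have hprod : ∏ i ∈ S, Function.update c j (-c j) i = -∏ i ∈ S, c i := by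
      rw [prod_update_of_mem hj, prod_eq_mul_prod_sdiff_singleton_of_mem hj, neg_mul]
    have hprod_ne : ∏ i ∈ S, c i ≠ 0 :=
      prod_ne_zero_iff.2 fun i _ => RCLike.ofReal_ne_zero.2 (hδ i).ne'
    have hplus := Φ.norm_map_piecewise_smul_add_le hball hc S
    have hminus := Φ.norm_map_piecewise_smul_add_le hball hc' S
    rw [← coe_coe, Φ.toMultilinearMap.map_piecewise_smul_add_of_forall_ssubset _ _ _ ⟨j, hj⟩ ih,
      coe_coe, ← hattain] at hplus hminus
    rw [hprod, neg_smul, ← sub_eq_add_neg] at hminus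
    exact (smul_eq_zero.1 (eq_zero_of_norm_add_le_of_norm_sub_le hplus hminus)).resolve_left
      hprod_ne

theorem map_eq_zero_of_norm_attained [NormedSpace ℝ Y] [StrictConvexSpace ℝ Y] [Nonempty ι]
    (hδ : ∀ i, 0 < δ i) (hattain : ‖Φ a‖ = ‖Φ‖)
    (hball : ∀ i (t : 𝕜), ‖t‖ ≤ δ i → ‖a i + t • e i‖ ≤ 1) : Φ e = 0 := by
  classical
  simpa using Φ.map_piecewise_eq_zero_of_norm_attained hδ hattain hball univ_nonempty

end ContinuousMultilinearMap

theorem multilinear_vanishes_on_unit_vectors_general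
    {𝕜 : Type*} [RCLike 𝕜] (N : ℕ) (hN : 0 < N)
    (X : Fin N → Type*) [∀ j, NormedAddCommGroup (X j)] [∀ j, NormedSpace 𝕜 (X j)]
    (en : ∀ j, ℕ → X j)
    (Y : Type*) [NormedAddCommGroup Y] [NormedSpace 𝕜 Y]
    [NormedSpace ℝ Y] [StrictConvexSpace ℝ Y]
    (Φ : ContinuousMultilinearMap 𝕜 X Y)
    (a : ∀ j, X j) (hattain : ‖Φ a‖ = ‖Φ‖)
    (hext : ∀ j, ∃ (n₀ : ℕ) (δ : ℝ), 0 < δ ∧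
      ∀ lam : 𝕜, ‖lam‖ ≤ δ → ∀ n, n₀ ≤ n → ‖a j + lam • en j n‖ ≤ 1) :
    ∃ n₀ : ℕ, ∀ n : Fin N → ℕ, (∀ j, n₀ ≤ n j) → Φ (fun j => en j (n j)) = 0 := by
  choose m δ hδ hball using hext
  have : Nonempty (Fin N) := ⟨⟨0, hN⟩⟩
  refine ⟨univ.sup m, fun n hn => Φ.map_eq_zero_of_norm_attained hδ hattain fun j t ht => ?_⟩
  exact hball j t ht (n j) ((le_sup (mem_univ j)).trans (hn j))

/-- Lemma 4.3: let `X₁, …, X_N` be Banach sequence spaces and `Y` strictly convex.  If a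
continuous `N`-linear map `Φ : X₁ × ⋯ × X_N → Y` attains its norm at `(a₁, …, a_N)`, where
each `a_j` satisfies the extremal condition (3.1), then there is `n₀` such that
`Φ(e_{n₁}, …, e_{n_N}) = 0` whenever `n₁, …, n_N ≥ n₀`. -/
theorem multilinear_vanishes_on_unit_vectors
    {𝕜 : Type*} [RCLike 𝕜] (N : ℕ) (hN : 0 < N)
    (X : Fin N → Type*) [∀ j, NormedAddCommGroup (X j)] [∀ j, NormedSpace 𝕜 (X j)]
    [∀ j, CompleteSpace (X j)]
    (toSeq : ∀ j, X j →ₗ[𝕜] (ℕ → 𝕜)) (htoSeq : ∀ j, Function.Injective (toSeq j))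
    (en : ∀ j, ℕ → X j) (hen : ∀ j n, toSeq j (en j n) = Pi.single n (1 : 𝕜))
    (Y : Type*) [NormedAddCommGroup Y] [NormedSpace 𝕜 Y] [CompleteSpace Y]
    [NormedSpace ℝ Y] [IsScalarTower ℝ 𝕜 Y] [StrictConvexSpace ℝ Y]
    (Φ : ContinuousMultilinearMap 𝕜 X Y)
    (a : ∀ j, X j) (ha : ∀ j, ‖a j‖ ≤ 1) (hattain : ‖Φ a‖ = ‖Φ‖)
    (hext : ∀ j, ∃ (n₀ : ℕ) (δ : ℝ), 0 < δ ∧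
      ∀ lam : 𝕜, ‖lam‖ ≤ δ → ∀ n, n₀ ≤ n → ‖a j + lam • en j n‖ ≤ 1) :
    ∃ n₀ : ℕ, ∀ n : Fin N → ℕ, (∀ j, n₀ ≤ n j) → Φ (fun j => en j (n j)) = 0 :=
  multilinear_vanishes_on_unit_vectors_general N hN X en Y Φ a hattain hext
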